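/- arXiv:1605.00859 — 2 statements merged into one kernel-verified Lean document; each statement's English description precedes it below -/
import Mathlib

section
/- There exists a morphism f : ℕ+ → ℤ/2ℤ (i.e., f(xy) = f(x) + f(y) for all positive integers x, y) such that no Pythagorean triple (a,b,c) with a, b, c ∈ [1,532] is monochromatic (i.e., 533 in the previous result is minimal). -/
/-!
Let `f` be the completely additive function with `f p = 1` exactly for the primes `p` in an
explicit set `S`. By additivity `f` colours `(k a, k b, k c)` monochromatically iff it colours
`(a, b, c)` so, and by Euclid's parametrisation every Pythagorean triple is a multiple of some
`(m² - n², 2mn, m² + n²)` with `0 < n < m`. So only the finitely many triples of that form with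
`m² + n² ≤ 532` have to be checked, which is a small computation.
-/

theorem Int.natAbs_sq_sub_sq {x y : ℤ} (h : y.natAbs ≤ x.natAbs) :
    (x ^ 2 - y ^ 2).natAbs = x.natAbs ^ 2 - y.natAbs ^ 2 := by
  have : x ^ 2 - y ^ 2 = ((x.natAbs ^ 2 - y.natAbs ^ 2 : ℕ) : ℤ) := by
    push_cast [Nat.pow_le_pow_left h 2]
    simp only [sq_abs]
  rw [this, Int.natAbs_natCast]

theorem Nat.exists_euclid_param_of_sq_add_sq {a b c : ℕ} (ha : a ≠ 0) (hb : b ≠ 0)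
    (h : a ^ 2 + b ^ 2 = c ^ 2) :
    ∃ k m n : ℕ, 0 < k ∧ 0 < n ∧ n < m ∧
      (a = k * (m ^ 2 - n ^ 2) ∧ b = k * (2 * m * n) ∨
        a = k * (2 * m * n) ∧ b = k * (m ^ 2 - n ^ 2)) ∧
      c = k * (m ^ 2 + n ^ 2) := by
  have hT : PythagoreanTriple a b c := by
    simp only [PythagoreanTriple, ← sq]
    exact_mod_cast h
  obtain ⟨k, m, n, hab, hc⟩ := PythagoreanTriple.classification.mp hT
  have hc' : c = k.natAbs * (m.natAbs ^ 2 + n.natAbs ^ 2) := by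
    rcases hc with hc | hc <;> rw [← Int.natAbs_natCast c, hc] <;>
      simp [Int.natAbs_mul, Int.natAbs_add_of_nonneg, Int.natAbs_pow, sq_nonneg]
  have hab' :
      a = k.natAbs * (m ^ 2 - n ^ 2).natAbs ∧ b = k.natAbs * (2 * m.natAbs * n.natAbs) ∨
        a = k.natAbs * (2 * m.natAbs * n.natAbs) ∧ b = k.natAbs * (m ^ 2 - n ^ 2).natAbs := by
    rw [← Int.natAbs_natCast a, ← Int.natAbs_natCast b]
    rcases hab with ⟨ha', hb'⟩ | ⟨ha', hb'⟩ <;> simp [ha', hb', Int.natAbs_mul, mul_assoc]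
  have hlegs : k.natAbs * (m ^ 2 - n ^ 2).natAbs ≠ 0 ∧
      k.natAbs * (2 * m.natAbs * n.natAbs) ≠ 0 := by
    rcases hab' with ⟨rfl, rfl⟩ | ⟨rfl, rfl⟩ <;> exact ⟨‹_›, ‹_›⟩
  simp only [ne_eq, mul_eq_zero, not_or, OfNat.ofNat_ne_zero, not_false_eq_true,
    true_and] at hlegs
  obtain ⟨⟨hk, hmn⟩, -, hm, hn⟩ := hlegs
  rcases lt_trichotomy n.natAbs m.natAbs with hlt | heq | hgt
  · rw [Int.natAbs_sq_sub_sq hlt.le] at hab'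
    exact ⟨k.natAbs, m.natAbs, n.natAbs, by omega, by omega, hlt, hab', hc'⟩
  · rw [Int.natAbs_sq_sub_sq heq.le, heq, Nat.sub_self] at hmn
    exact absurd rfl hmn
  · rw [← Int.natAbs_neg (m ^ 2 - n ^ 2), neg_sub, Int.natAbs_sq_sub_sq hgt.le] at hab'
    refine ⟨k.natAbs, n.natAbs, m.natAbs, by omega, by omega, hgt, ?_, by rw [hc', add_comm]⟩
    rwa [mul_right_comm 2]

def IsMonochromatic {α : Type*} (f : ℕ → α) (a b c : ℕ) : Prop :=
  f a = f b ∧ f b = f c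

theorem IsMonochromatic.swap {α : Type*} {f : ℕ → α} {a b c : ℕ}
    (h : IsMonochromatic f a b c) : IsMonochromatic f b a c :=
  ⟨h.1.symm, h.1.trans h.2⟩

instance {α : Type*} [DecidableEq α] (f : ℕ → α) (a b c : ℕ) :
    Decidable (IsMonochromatic f a b c) :=
  inferInstanceAs (Decidable (_ ∧ _))

section CompletelyAdditive

variable {G : Type*} [Add G] [IsLeftCancelAdd G] {f : ℕ → G}
  (hf : ∀ x y, x ≠ 0 → y ≠ 0 → f (x * y) = f x + f y)
include hf

theorem isMonochromatic_mul_iff {k a b c : ℕ} (hk : k ≠ 0) (ha : a ≠ 0) (hb : b ≠ 0)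
    (hc : c ≠ 0) : IsMonochromatic f (k * a) (k * b) (k * c) ↔ IsMonochromatic f a b c := by
  simp only [IsMonochromatic, hf k _ hk ha, hf k _ hk hb, hf k _ hk hc, add_right_inj]

theorem not_isMonochromatic_of_euclid {N : ℕ}
    (heuclid : ∀ m n, 0 < n → n < m → m ^ 2 + n ^ 2 ≤ N →
      ¬IsMonochromatic f (m ^ 2 - n ^ 2) (2 * m * n) (m ^ 2 + n ^ 2))
    {a b c : ℕ} (ha : a ≠ 0) (hb : b ≠ 0) (hcN : c ≤ N) (h : a ^ 2 + b ^ 2 = c ^ 2) :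
    ¬IsMonochromatic f a b c := by
  obtain ⟨k, m, n, hk, hn, hnm, hab, rfl⟩ := Nat.exists_euclid_param_of_sq_add_sq ha hb h
  have hmnN : m ^ 2 + n ^ 2 ≤ N := le_trans (Nat.le_mul_of_pos_left _ hk) hcN
  have hdiff : m ^ 2 - n ^ 2 ≠ 0 := Nat.sub_ne_zero_of_lt (Nat.pow_lt_pow_left hnm two_ne_zero)
  have hprod : 2 * m * n ≠ 0 := by
    have : 0 < m := hn.trans hnm
    positivity
  have hsum : m ^ 2 + n ^ 2 ≠ 0 := by positivity
  intro hmono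
  rcases hab with ⟨rfl, rfl⟩ | ⟨rfl, rfl⟩
  · rw [isMonochromatic_mul_iff hf hk.ne' hdiff hprod hsum] at hmono
    exact heuclid m n hn hnm hmnN hmono
  · rw [isMonochromatic_mul_iff hf hk.ne' hprod hdiff hsum] at hmono
    exact heuclid m n hn hnm hmnN hmono.swap

end CompletelyAdditive

def parityColoring (S : Finset ℕ) (n : ℕ) : ZMod 2 :=
  ∑ p ∈ S, (padicValNat p n : ZMod 2)

theorem parityColoring_mul {S : Finset ℕ} (hS : ∀ p ∈ S, p.Prime) {x y : ℕ} (hx : x ≠ 0)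
    (hy : y ≠ 0) : parityColoring S (x * y) = parityColoring S x + parityColoring S y := by
  rw [parityColoring, parityColoring, parityColoring, ← Finset.sum_add_distrib]
  refine Finset.sum_congr rfl fun p hp => ?_
  have : Fact p.Prime := ⟨hS p hp⟩
  rw [padicValNat.mul hx hy, Nat.cast_add]

def avoidingPrimes : Finset ℕ :=
  {3, 7, 11, 13, 17, 19, 23, 29, 41, 53, 59, 71, 79, 89, 101, 137, 149, 157, 233, 257, 281, 313,
    349, 353, 389, 397, 433, 449, 457, 521}

theorem prime_of_mem_avoidingPrimes : ∀ p ∈ avoidingPrimes, p.Prime := by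
  decide +kernel

theorem not_isMonochromatic_parityColoring_euclid : ∀ m < 24, ∀ n < m, 0 < n →
    m ^ 2 + n ^ 2 ≤ 532 →
      ¬IsMonochromatic (parityColoring avoidingPrimes) (m ^ 2 - n ^ 2) (2 * m * n)
        (m ^ 2 + n ^ 2) := by
  decide +kernel

/-- There is a morphism `f : ℕ+ → ℤ/2ℤ` under which no Pythagorean triple in `[1, 532]`
is monochromatic: `533` is minimal in the previous result. -/
theorem morphism_zmod2_avoiding_532 :
    ∃ f : ℕ+ → ZMod 2, (∀ x y : ℕ+, f (x * y) = f x + f y) ∧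
      ∀ a b c : ℕ+, a ≤ 532 → b ≤ 532 → c ≤ 532 →
        a ^ 2 + b ^ 2 = c ^ 2 → ¬(f a = f b ∧ f b = f c) := by
  have hadd : ∀ x y, x ≠ 0 → y ≠ 0 → parityColoring avoidingPrimes (x * y) =
      parityColoring avoidingPrimes x + parityColoring avoidingPrimes y :=
    fun _ _ => parityColoring_mul prime_of_mem_avoidingPrimes
  refine ⟨fun n => parityColoring avoidingPrimes n, fun x y => ?_, fun a b c _ _ hc h => ?_⟩
  · beta_reduce
    rw [PNat.mul_coe]
    exact hadd x y x.ne_zero y.ne_zero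
  · refine not_isMonochromatic_of_euclid hadd (N := 532) (fun m n hn hnm hmn => ?_)
      a.ne_zero b.ne_zero (by exact_mod_cast hc) (by exact_mod_cast congrArg PNat.val h)
    exact not_isMonochromatic_parityColoring_euclid m (by nlinarith) n hnm hn hmn
end

section
/- Let p_i denote the i-th prime number (p_1 = 2, p_2 = 3, ...). Every morphism f : ℕ+ → ℤ/2ℤ with f(p_i) = 0 for i ∈ {1,3,9,11,12,18,21,30,57,74,80,89} and f(p_i) = 1 for i ∈ {2,4,5,6,7,8,10,13,16,24,26,55,65} (and arbitrary values on all other primes) has the property that no Pythagorean triple (a,b,c) with a, b, c ∈ [1,532] is monochromatic. -/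
/-!
Every Pythagorean triple is `k • (m² - n², 2mn, m² + n²)` with `0 < n < m` (legs possibly
swapped), and a completely additive `f` satisfies `f (k x) = f k + f x`, so a monochromatic triple
with `c ≤ 532` yields a monochromatic triple `(m² - n², 2mn, m² + n²)` with `m² + n² ≤ 532`.
For each of these finitely many `(m, n)`, the prescribed values at the primes already determine
`f` on two of the three entries and these differ; the kernel checks this by trial division.
-/

section AdditiveEval

variable {G : Type*}

/-- `none` when the table does not determine the value of a completely additive function at `n`
(or the `fuel` runs out). -/
def additiveEval [AddMonoid G] (L : List (ℕ × G)) : ℕ → ℕ → Option G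
  | 0, _ => none
  | fuel + 1, n =>
    if n = 1 then some 0 else
      match L.find? (fun q => n % q.1 == 0) with
      | some (p, v) => (additiveEval L fuel (n / p)).map (v + ·)
      | none => none

theorem additiveEval_sound [AddLeftCancelMonoid G] {F : ℕ → G}
    (hF : ∀ x y, 0 < x → 0 < y → F (x * y) = F x + F y) {L : List (ℕ × G)}
    (hL : ∀ q ∈ L, F q.1 = q.2) {fuel n : ℕ} {v : G} (h : additiveEval L fuel n = some v) :
    0 < n ∧ F n = v := by
  induction fuel generalizing n v with
  | zero => simp [additiveEval] at h
  | succ fuel ih =>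
    rw [additiveEval] at h
    split_ifs at h with hn
    · subst hn
      refine ⟨one_pos, (Option.some.inj h) ▸ ?_⟩
      simpa using hF 1 1 one_pos one_pos
    split at h
    next p w hfind =>
      obtain ⟨u, hu, rfl⟩ := Option.map_eq_some_iff.mp h
      obtain ⟨hpos, hu⟩ := ih hu
      have hdvd : p ∣ n := Nat.dvd_of_mod_eq_zero (by simpa using List.find?_some hfind)
      have hp : 0 < p := Nat.pos_of_ne_zero fun hp0 => by simp [hp0] at hpos
      rw [← Nat.mul_div_cancel' hdvd, hF _ _ hp hpos, hL _ (List.mem_of_find?_eq_some hfind), hu]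
      exact ⟨Nat.mul_pos hp hpos, rfl⟩
    next => simp at h

def knownNe [DecidableEq G] : Option G → Option G → Bool
  | some a, some b => a != b
  | _, _ => false

theorem ne_of_knownNe_additiveEval [AddLeftCancelMonoid G] [DecidableEq G] {F : ℕ → G}
    (hF : ∀ x y, 0 < x → 0 < y → F (x * y) = F x + F y) {L : List (ℕ × G)}
    (hL : ∀ q ∈ L, F q.1 = q.2) {fx fy x y : ℕ}
    (h : knownNe (additiveEval L fx x) (additiveEval L fy y) = true) : F x ≠ F y :=
  match hx : additiveEval L fx x, hy : additiveEval L fy y, h with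
  | some a, some b, h => by
    rw [(additiveEval_sound hF hL hx).2, (additiveEval_sound hF hL hy).2]
    simpa [knownNe] using h

end AdditiveEval

theorem PNat.map_toPNat'_mul {G : Type*} [Add G] {f : ℕ+ → G}
    (hf : ∀ x y : ℕ+, f (x * y) = f x + f y) {x y : ℕ} (hx : 0 < x) (hy : 0 < y) :
    f (x * y).toPNat' = f x.toPNat' + f y.toPNat' := by
  rw [← hf]
  congr 1
  apply PNat.eq
  simp [Nat.toPNat'_coe, hx, hy]

/-- Trial division; unlike the `Nat.Prime` instance, it is cheap enough for the kernel to
evaluate on all numbers below 461. -/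
def primeTest (n : ℕ) : Bool :=
  2 ≤ n && (List.range n).all fun m => m < 2 || n % m != 0

theorem primeTest_iff (n : ℕ) : primeTest n = true ↔ n.Prime := by
  rw [Nat.prime_def_lt']
  simp only [primeTest, Bool.and_eq_true, decide_eq_true_eq, List.all_eq_true, List.mem_range,
    Bool.or_eq_true, bne_iff_ne, ne_eq, Nat.dvd_iff_mod_eq_zero]
  refine and_congr_right fun _ => forall_congr' fun m => ?_
  omega

theorem nth_prime_countP_primeTest {p : ℕ} (hp : primeTest p = true) :
    Nat.nth Nat.Prime ((List.range p).countP primeTest) = p := by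
  convert Nat.nth_count ((primeTest_iff p).mp hp) using 2
  exact List.countP_congr fun m _ => by simp [primeTest_iff]

theorem Int.natAbs_sq_sub_sq_of_le {m n : ℤ} (h : n.natAbs ≤ m.natAbs) :
    (m ^ 2 - n ^ 2).natAbs = m.natAbs ^ 2 - n.natAbs ^ 2 := by
  rw [← Int.natAbs_sq m, ← Int.natAbs_sq n, ← Nat.cast_pow, ← Nat.cast_pow,
    ← Nat.cast_sub (Nat.pow_le_pow_left h 2), Int.natAbs_natCast]

theorem Nat.exists_euclid_param {a b c : ℕ} (ha : a ≠ 0) (hb : b ≠ 0)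
    (h : a ^ 2 + b ^ 2 = c ^ 2) :
    ∃ k m n : ℕ, 0 < n ∧ n < m ∧ c = k * (m ^ 2 + n ^ 2) ∧
      (a = k * (m ^ 2 - n ^ 2) ∧ b = k * (2 * m * n) ∨
        a = k * (2 * m * n) ∧ b = k * (m ^ 2 - n ^ 2)) := by
  have hpt : PythagoreanTriple (a : ℤ) b c := by
    have hZ := congrArg (Nat.cast : ℕ → ℤ) h
    push_cast at hZ
    unfold PythagoreanTriple
    linear_combination hZ
  obtain ⟨k, m, n, hab, hc⟩ := PythagoreanTriple.classification.mp hpt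
  have hZ : (m ^ 2 + n ^ 2).natAbs = m.natAbs ^ 2 + n.natAbs ^ 2 := by
    rw [Int.natAbs_add_of_nonneg (sq_nonneg m) (sq_nonneg n), Int.natAbs_pow, Int.natAbs_pow]
  have hY : (2 * m * n).natAbs = 2 * m.natAbs * n.natAbs := by
    simp only [Int.natAbs_mul]
    rfl
  have hc' : c = k.natAbs * (m.natAbs ^ 2 + n.natAbs ^ 2) := by
    rcases hc with hc | hc <;>
      simpa only [Int.natAbs_natCast, Int.natAbs_mul, Int.natAbs_neg, hZ] using
        congrArg Int.natAbs hc
  have hab' : a = k.natAbs * (m ^ 2 - n ^ 2).natAbs ∧ b = k.natAbs * (2 * m.natAbs * n.natAbs) ∨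
      a = k.natAbs * (2 * m.natAbs * n.natAbs) ∧ b = k.natAbs * (m ^ 2 - n ^ 2).natAbs := by
    rcases hab with ⟨ha', hb'⟩ | ⟨ha', hb'⟩ <;> [left; right] <;>
      exact ⟨by simpa only [Int.natAbs_natCast, Int.natAbs_mul, hY] using congrArg Int.natAbs ha',
        by simpa only [Int.natAbs_natCast, Int.natAbs_mul, hY] using congrArg Int.natAbs hb'⟩
  have hlegs : (m ^ 2 - n ^ 2).natAbs ≠ 0 ∧ 2 * m.natAbs * n.natAbs ≠ 0 := by
    rcases hab' with ⟨rfl, rfl⟩ | ⟨rfl, rfl⟩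
    · exact ⟨right_ne_zero_of_mul ha, right_ne_zero_of_mul hb⟩
    · exact ⟨right_ne_zero_of_mul hb, right_ne_zero_of_mul ha⟩
  have hN : n.natAbs ≠ 0 := right_ne_zero_of_mul hlegs.2
  have hM : m.natAbs ≠ 0 := right_ne_zero_of_mul (left_ne_zero_of_mul hlegs.2)
  have hMN : n.natAbs ≠ m.natAbs := fun he =>
    hlegs.1 (by rw [Int.natAbs_sq_sub_sq_of_le he.le, he, Nat.sub_self])
  rcases lt_or_gt_of_ne hMN with hlt | hlt
  · refine ⟨k.natAbs, m.natAbs, n.natAbs, Nat.pos_of_ne_zero hN, hlt, hc', ?_⟩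
    rwa [Int.natAbs_sq_sub_sq_of_le hlt.le] at hab'
  · refine ⟨k.natAbs, n.natAbs, m.natAbs, Nat.pos_of_ne_zero hM, hlt, by rw [hc', add_comm], ?_⟩
    rwa [← Int.natAbs_neg (m ^ 2 - n ^ 2), neg_sub, Int.natAbs_sq_sub_sq_of_le hlt.le,
      mul_right_comm 2 m.natAbs] at hab'

theorem mul_monochromatic_iff {G : Type*} [AddLeftCancelSemigroup G] {F : ℕ → G}
    (hF : ∀ x y, 0 < x → 0 < y → F (x * y) = F x + F y) {k x y z : ℕ} (hk : 0 < k)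
    (hx : 0 < x) (hy : 0 < y) (hz : 0 < z) :
    (F (k * x) = F (k * y) ∧ F (k * y) = F (k * z)) ↔ (F x = F y ∧ F y = F z) := by
  simp only [hF k _ hk hx, hF k _ hk hy, hF k _ hk hz, add_right_inj]

section Colouring532

def primeColouring : List (ℕ × ZMod 2) :=
  [(2, 0), (3, 1), (5, 0), (7, 1), (11, 1), (13, 1), (17, 1), (19, 1), (23, 0), (29, 1), (31, 0),
   (37, 0), (41, 1), (53, 1), (61, 0), (73, 0), (89, 1), (101, 1), (113, 0), (257, 1), (269, 0),
   (313, 1), (373, 0), (409, 0), (461, 0)]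

set_option maxRecDepth 10000 in
theorem primeColouring_spec {F : ℕ → ZMod 2}
    (h0 : ∀ i ∈ ({1, 3, 9, 11, 12, 18, 21, 30, 57, 74, 80, 89} : Finset ℕ),
      F (Nat.nth Nat.Prime (i - 1)) = 0)
    (h1 : ∀ i ∈ ({2, 4, 5, 6, 7, 8, 10, 13, 16, 24, 26, 55, 65} : Finset ℕ),
      F (Nat.nth Nat.Prime (i - 1)) = 1) :
    ∀ q ∈ primeColouring, F q.1 = q.2 := by
  have hindex : ∀ q ∈ primeColouring, primeTest q.1 = true ∧
      ((List.range q.1).countP primeTest + 1 ∈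
          ({1, 3, 9, 11, 12, 18, 21, 30, 57, 74, 80, 89} : Finset ℕ) ∧ q.2 = 0 ∨
        (List.range q.1).countP primeTest + 1 ∈
          ({2, 4, 5, 6, 7, 8, 10, 13, 16, 24, 26, 55, 65} : Finset ℕ) ∧ q.2 = 1) := by
    decide
  intro q hq
  obtain ⟨hp, ⟨hi, hv⟩ | ⟨hi, hv⟩⟩ := hindex q hq
  · simpa [hv, nth_prime_countP_primeTest hp] using h0 _ hi
  · simpa [hv, nth_prime_countP_primeTest hp] using h1 _ hi

def separatedByColouring (m n : ℕ) : Bool :=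
  let value := fun x => additiveEval primeColouring x x
  knownNe (value (m ^ 2 - n ^ 2)) (value (2 * m * n)) ||
    knownNe (value (2 * m * n)) (value (m ^ 2 + n ^ 2))

theorem separatedByColouring_of_le_532 :
    ∀ m < 24, ∀ n < m, 0 < n → m ^ 2 + n ^ 2 ≤ 532 → separatedByColouring m n = true := by
  decide

variable {F : ℕ → ZMod 2} (hF : ∀ x y, 0 < x → 0 < y → F (x * y) = F x + F y)
  (hP : ∀ q ∈ primeColouring, F q.1 = q.2)
include hF hP

theorem not_monochromatic_euclid_of_le_532 {m n : ℕ} (hn : 0 < n) (hnm : n < m)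
    (hmn : m ^ 2 + n ^ 2 ≤ 532) :
    ¬(F (m ^ 2 - n ^ 2) = F (2 * m * n) ∧ F (2 * m * n) = F (m ^ 2 + n ^ 2)) := by
  have hsep := separatedByColouring_of_le_532 m (by nlinarith) n hnm hn hmn
  simp only [separatedByColouring, Bool.or_eq_true] at hsep
  rintro ⟨hXY, hYZ⟩
  rcases hsep with h | h
  · exact ne_of_knownNe_additiveEval hF hP h hXY
  · exact ne_of_knownNe_additiveEval hF hP h hYZ

theorem not_monochromatic_of_sq_add_sq_of_le_532 {a b c : ℕ} (ha : a ≠ 0) (hb : b ≠ 0)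
    (hc : c ≤ 532) (h : a ^ 2 + b ^ 2 = c ^ 2) : ¬(F a = F b ∧ F b = F c) := by
  obtain ⟨k, m, n, hn, hnm, rfl, hab⟩ := Nat.exists_euclid_param ha hb h
  have hk : 0 < k := by
    rcases hab with ⟨rfl, -⟩ | ⟨rfl, -⟩ <;> exact Nat.pos_of_ne_zero (left_ne_zero_of_mul ha)
  have hX : 0 < m ^ 2 - n ^ 2 := Nat.sub_pos_of_lt (Nat.pow_lt_pow_left hnm two_ne_zero)
  have hY : 0 < 2 * m * n := Nat.mul_pos (Nat.mul_pos two_pos (hn.trans hnm)) hn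
  have hZ : 0 < m ^ 2 + n ^ 2 := by positivity
  have hprim := not_monochromatic_euclid_of_le_532 hF hP hn hnm
    ((Nat.le_mul_of_pos_left _ hk).trans hc)
  rcases hab with ⟨rfl, rfl⟩ | ⟨rfl, rfl⟩
  · rwa [mul_monochromatic_iff hF hk hX hY hZ]
  · rw [mul_monochromatic_iff hF hk hY hX hZ]
    exact fun ⟨hYX, hXZ⟩ => hprim ⟨hYX.symm, hYX.trans hXZ⟩

end Colouring532

/-- Any morphism `f : ℕ+ → ℤ/2ℤ` sending the `i`-th prime `p_i` to `0` for
`i ∈ {1,3,9,11,12,18,21,30,57,74,80,89}` and to `1` for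
`i ∈ {2,4,5,6,7,8,10,13,16,24,26,55,65}` (arbitrary values on all other primes)
admits no monochromatic Pythagorean triple in `[1, 532]`.
Here `p_i = Nat.nth Nat.Prime (i - 1)` since `Nat.nth` is 0-indexed. -/
theorem avoiding_morphism_values_532 (f : ℕ+ → ZMod 2)
    (hf : ∀ x y : ℕ+, f (x * y) = f x + f y)
    (h0 : ∀ i ∈ ({1, 3, 9, 11, 12, 18, 21, 30, 57, 74, 80, 89} : Finset ℕ),
      f (Nat.nth Nat.Prime (i - 1)).toPNat' = 0)
    (h1 : ∀ i ∈ ({2, 4, 5, 6, 7, 8, 10, 13, 16, 24, 26, 55, 65} : Finset ℕ),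
      f (Nat.nth Nat.Prime (i - 1)).toPNat' = 1) :
    ∀ a b c : ℕ+, a ≤ 532 → b ≤ 532 → c ≤ 532 →
      a ^ 2 + b ^ 2 = c ^ 2 → ¬(f a = f b ∧ f b = f c) := by
  intro a b c _ _ hc h
  have hmono := not_monochromatic_of_sq_add_sq_of_le_532 (F := fun n => f n.toPNat')
    (fun x y hx hy => PNat.map_toPNat'_mul hf hx hy) (primeColouring_spec (F := fun n => f n.toPNat') h0 h1)
    a.ne_zero b.ne_zero (PNat.coe_le_coe c 532 |>.mpr hc) (by exact_mod_cast congrArg PNat.val h)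
  simpa only [PNat.coe_toPNat'] using hmono
end
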